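/- arXiv:2506.17152 — 12 statements merged into one kernel-verified Lean document; each statement's English description precedes it below -/
import Mathlib

section
/- If S is an A-numerical semigroup with Frobenius number f and S ≠ Δ(f) = {0} ∪ {x ∈ ℕ : x > f}, then S \ {m(S)} is also an A-numerical semigroup with Frobenius number f, where m(S) is the smallest positive element of S. -/
/-- `S` is a numerical semigroup: a submonoid of `ℕ` with finite complement. -/
def IsNumSgp (S : Set ℕ) : Prop :=
  0 ∈ S ∧ (∀ a ∈ S, ∀ b ∈ S, a + b ∈ S) ∧ (Sᶜ : Set ℕ).Finite

/-- `f` is the Frobenius number of `S`: the maximum of `ℕ \ S`. -/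
def IsFrob (S : Set ℕ) (f : ℕ) : Prop :=
  f ∉ S ∧ ∀ x, x ∉ S → x ≤ f

/-- `S` has no two consecutive elements both smaller than `f`. -/
def IsASgp (S : Set ℕ) (f : ℕ) : Prop :=
  ¬ ∃ x, x < f ∧ x ∈ S ∧ x + 1 ∈ S

/-- Multiplicity: least nonzero element. -/
def IsMult (S : Set ℕ) (m : ℕ) : Prop :=
  m ∈ S ∧ m ≠ 0 ∧ ∀ x ∈ S, x ≠ 0 → m ≤ x

/-- The Apéry set of `S` with respect to `b`. -/
def Ap (S : Set ℕ) (b : ℕ) : Set ℕ :=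
  {a | a ∈ S ∧ (a < b ∨ a - b ∉ S)}

/-- `Δ(f) = {0} ∪ {x : x > f}`. -/
def Delta (f : ℕ) : Set ℕ := {0} ∪ {x | f < x}

theorem stmt1 (S : Set ℕ) (f m : ℕ)
    (hS : IsNumSgp S) (hf : IsFrob S f) (hA : IsASgp S f)
    (hne : S ≠ Delta f) (hm : IsMult S m) :
    IsNumSgp (S \ {m}) ∧ IsFrob (S \ {m}) f ∧ IsASgp (S \ {m}) f := by
  obtain ⟨h0, hadd, hfin⟩ := hS
  obtain ⟨hfS, hfmax⟩ := hf
  obtain ⟨hmS, hm0, hmin⟩ := hm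
  -- Delta f ⊆ S
  have hsub : Delta f ⊆ S := by
    intro x hx
    rcases hx with hx | hx
    · simp only [Set.mem_singleton_iff] at hx; subst hx; exact h0
    · by_contra hxS
      exact absurd (hfmax x hxS) (not_le.mpr hx)
  -- m < f
  have hmf : m < f := by
    obtain ⟨x, hxS, hxD⟩ := Set.exists_of_ssubset ⟨hsub, fun h => hne (le_antisymm h hsub)⟩
    have hx0 : x ≠ 0 := fun h => hxD (Or.inl (by simp [h]))
    have hxf : x ≤ f := le_of_not_gt fun h => hxD (Or.inr h)
    have hxf' : x < f := lt_of_le_of_ne hxf (fun h => hfS (h ▸ hxS))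
    exact lt_of_le_of_lt (hmin x hxS hx0) hxf'
  refine ⟨⟨⟨h0, fun h => hm0 (by simpa using h.symm)⟩, ?_, ?_⟩, ⟨fun h => hfS h.1, ?_⟩, ?_⟩
  · rintro a ⟨haS, ham⟩ b ⟨hbS, hbm⟩
    refine ⟨hadd a haS b hbS, ?_⟩
    simp only [Set.mem_singleton_iff] at *
    intro hab
    rcases Nat.eq_zero_or_pos a with ha0 | ha0
    · exact hbm (by omega)
    rcases Nat.eq_zero_or_pos b with hb0 | hb0
    · exact ham (by omega)
    have := hmin a haS (by omega)
    have := hmin b hbS (by omega)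
    omega
  · have : (S \ {m})ᶜ ⊆ Sᶜ ∪ {m} := by
      intro x hx
      by_cases hxm : x = m
      · exact Or.inr hxm
      · exact Or.inl (fun hxS => hx ⟨hxS, hxm⟩)
    exact Set.Finite.subset (hfin.union (Set.finite_singleton m)) this
  · intro x hx
    by_cases hxm : x = m
    · omega
    · exact hfmax x (fun hxS => hx ⟨hxS, hxm⟩)
  · rintro ⟨x, hxf, hx1, hx2⟩
    exact hA ⟨x, hxf, hx1.1, hx2.1⟩
end

section
/- If S and T are A-numerical semigroups both with Frobenius number f, then S ∩ T is an A-numerical semigroup with Frobenius number f. -/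
theorem stmt2 (S T : Set ℕ) (f : ℕ)
    (hS : IsNumSgp S) (hT : IsNumSgp T)
    (hfS : IsFrob S f) (hfT : IsFrob T f)
    (hAS : IsASgp S f) (hAT : IsASgp T f) :
    IsNumSgp (S ∩ T) ∧ IsFrob (S ∩ T) f ∧ IsASgp (S ∩ T) f := by
  obtain ⟨hS0, hSadd, hSfin⟩ := hS
  obtain ⟨hT0, hTadd, hTfin⟩ := hT
  refine ⟨⟨⟨hS0, hT0⟩, ?_, ?_⟩, ⟨fun h => hfS.1 h.1, fun x hx => ?_⟩, ?_⟩
  · rintro a ⟨haS, haT⟩ b ⟨hbS, hbT⟩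
    exact ⟨hSadd a haS b hbS, hTadd a haT b hbT⟩
  · rw [Set.compl_inter]
    exact hSfin.union hTfin
  · rcases not_and_or.mp hx with h | h
    · exact hfS.2 x h
    · exact hfT.2 x h
  · rintro ⟨x, hxf, ⟨hxS, _⟩, ⟨hxS1, _⟩⟩
    exact hAS ⟨x, hxf, hxS, hxS1⟩
end

section
/- Let S be a numerical semigroup, x a special gap of S, and b ∈ S \ {0}. Then Ap(S ∪ {x}, b) ⊆ {x} ∪ (Ap(S, b) \ {x + b}), with equality when x − b ∉ S (i.e., x < b or x − b is a gap of S). -/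
theorem stmt4 (S : Set ℕ) (x b : ℕ) (hS : IsNumSgp S)
    (hx : x ∉ S) (h2x : 2 * x ∈ S) (hxs : ∀ s ∈ S, s ≠ 0 → x + s ∈ S)
    (hb : b ∈ S) (hb0 : b ≠ 0) :
    Ap (S ∪ {x}) b ⊆ {x} ∪ (Ap S b \ {x + b}) ∧
    ((x < b ∨ x - b ∉ S) → Ap (S ∪ {x}) b = {x} ∪ (Ap S b \ {x + b})) := by
  have hx0 : x ≠ 0 := fun h => hx (h ▸ hS.1)
  have hsub : Ap (S ∪ {x}) b ⊆ {x} ∪ (Ap S b \ {x + b}) := by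
    rintro a ⟨(haS | hax), hcond⟩
    · right
      constructor
      · refine ⟨haS, ?_⟩
        rcases hcond with h | h
        · exact Or.inl h
        · exact Or.inr fun hab => h (Or.inl hab)
      · intro hxb
        simp only [Set.mem_singleton_iff] at hxb
        subst hxb
        rcases hcond with h | h
        · omega
        · apply h
          right
          simp [Nat.add_sub_cancel]
    · left; exact hax
  refine ⟨hsub, fun hxb => Set.Subset.antisymm hsub ?_⟩
  rintro a (hax | ⟨⟨haS, hcond⟩, hne⟩)
  · simp only [Set.mem_singleton_iff] at hax
    subst hax
    refine ⟨Or.inr rfl, ?_⟩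
    rcases hxb with h | h
    · exact Or.inl h
    · right
      rintro (h1 | h1)
      · exact h h1
      · simp only [Set.mem_singleton_iff] at h1
        omega
  · refine ⟨Or.inl haS, ?_⟩
    rcases hcond with h | h
    · exact Or.inl h
    · right
      rintro (h1 | h1)
      · exact h h1
      · simp only [Set.mem_singleton_iff] at h1
        simp only [Set.mem_singleton_iff] at hne
        omega
end

section
/- Let S be a numerical semigroup with Frobenius number f, b ∈ S \ {0}, and write Ap(S, b) = {w(0), …, w(b−1)} with w(i) the least element of S congruent to i mod b. Let X = {i ∈ {1,…,b−1} : w(i) < f}. Then S is an A-semigroup if and only if X ∪ {0, b} contains no two consecutive integers. -/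
theorem stmt6 (S : Set ℕ) (f b : ℕ) (w : ℕ → ℕ)
    (hS : IsNumSgp S) (hf : IsFrob S f) (hb : b ∈ S) (hb0 : b ≠ 0)
    (hw : ∀ i < b, w i ∈ S ∧ w i % b = i ∧ ∀ s ∈ S, s % b = i → w i ≤ s) :
    IsASgp S f ↔
      ∀ i, i ∈ ({j | 1 ≤ j ∧ j < b ∧ w j < f} ∪ {0, b}) →
        i + 1 ∉ ({j | 1 ≤ j ∧ j < b ∧ w j < f} ∪ {0, b} : Set ℕ) := by
  obtain ⟨h0, hadd, -⟩ := hS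
  obtain ⟨hfS, hfmax⟩ := hf
  have hf0 : f ≠ 0 := fun h => hfS (h ▸ h0)
  have haddb : ∀ x ∈ S, ∀ k : ℕ, x + b * k ∈ S := by
    intro x hx k
    induction k with
    | zero => simpa using hx
    | succ m ih =>
      rw [Nat.mul_succ, ← Nat.add_assoc]
      exact hadd _ ih b hb
  have hmulb : ∀ k : ℕ, b * k ∈ S := by
    intro k; simpa using haddb 0 h0 k
  constructor
  · -- IsASgp → no consecutive pair
    intro hA i hi hi1
    simp only [Set.mem_union, Set.mem_setOf_eq, Set.mem_insert_iff,
      Set.mem_singleton_iff] at hi hi1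
    apply hA
    rcases hi with ⟨hi1', hib', hif⟩ | hi0 | hib
    · -- i ∈ X
      obtain ⟨huS, hu2, -⟩ := hw i hib'
      rcases hi1 with ⟨-, h1b, h1f⟩ | h | hb1
      · -- i+1 ∈ X
        obtain ⟨hvS, hv2, -⟩ := hw (i + 1) h1b
        have hmod : (w i + 1) % b = w (i + 1) % b := by
          rw [Nat.add_mod, hu2, Nat.mod_eq_of_lt (show 1 < b by omega),
            Nat.mod_eq_of_lt h1b, hv2]
        by_cases hcase : w i < w (i + 1)
        · obtain ⟨k, hk⟩ := (Nat.modEq_iff_dvd' (by omega : w i + 1 ≤ w (i + 1))).mp hmod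
          refine ⟨w i + b * k, by omega, haddb _ huS k, ?_⟩
          rw [show w i + b * k + 1 = w (i + 1) from by omega]
          exact hvS
        · obtain ⟨k, hk⟩ :=
            (Nat.modEq_iff_dvd' (by omega : w (i + 1) ≤ w i + 1)).mp hmod.symm
          refine ⟨w i, hif, huS, ?_⟩
          rw [show w i + 1 = w (i + 1) + b * k from by omega]
          exact haddb _ hvS k
      · omega
      · -- i + 1 = b
        have hm : (w i + 1) % b = 0 := by
          rw [Nat.add_mod, hu2, Nat.mod_eq_of_lt (show 1 < b by omega), hb1,
            Nat.mod_self]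
        obtain ⟨k, hk⟩ := Nat.dvd_of_mod_eq_zero hm
        refine ⟨w i, hif, huS, ?_⟩
        rw [hk]
        exact hmulb k
    · -- i = 0
      subst hi0
      rcases hi1 with ⟨-, h1b, h1f⟩ | h | hb1
      · -- 1 ∈ X
        have h1f' : w 1 < f := h1f
        obtain ⟨hvS, hv2, -⟩ := hw 1 h1b
        have hvne : w 1 ≠ 0 := by
          intro h; rw [h, Nat.zero_mod] at hv2; exact one_ne_zero hv2.symm
        have hmod : 1 % b = w 1 % b := by
          rw [hv2, Nat.mod_eq_of_lt h1b]
        obtain ⟨k, hk⟩ := (Nat.modEq_iff_dvd' (by omega : 1 ≤ w 1)).mp hmod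
        refine ⟨b * k, by omega, hmulb k, ?_⟩
        rw [show b * k + 1 = w 1 from by omega]
        exact hvS
      · omega
      · -- b = 1
        refine ⟨0, by omega, h0, ?_⟩
        rw [show (0 : ℕ) + 1 = b from by omega]
        exact hb
    · -- i = b : impossible since then i+1 > b
      rcases hi1 with ⟨-, h, -⟩ | h | h <;> omega
  · -- no consecutive pair → IsASgp
    intro h
    rintro ⟨x, hxf, hxS, hx1S⟩
    have hbpos : 0 < b := Nat.pos_of_ne_zero hb0
    have hib : x % b < b := Nat.mod_lt _ hbpos
    refine h (x % b) ?_ ?_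
    · simp only [Set.mem_union, Set.mem_setOf_eq, Set.mem_insert_iff,
        Set.mem_singleton_iff]
      by_cases hi0 : x % b = 0
      · exact Or.inr (Or.inl hi0)
      · obtain ⟨-, -, hmin⟩ := hw (x % b) hib
        exact Or.inl ⟨by omega, hib, lt_of_le_of_lt (hmin x hxS rfl) hxf⟩
    · simp only [Set.mem_union, Set.mem_setOf_eq, Set.mem_insert_iff,
        Set.mem_singleton_iff]
      by_cases h1b : x % b + 1 = b
      · exact Or.inr (Or.inr h1b)
      · have h1b' : x % b + 1 < b := by omega
        obtain ⟨hvS, -, hmin⟩ := hw (x % b + 1) h1b'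
        have hx1 : (x + 1) % b = x % b + 1 := by
          rw [Nat.add_mod, Nat.mod_eq_of_lt (show 1 < b by omega),
            Nat.mod_eq_of_lt h1b']
        have hle : w (x % b + 1) ≤ x + 1 := hmin (x + 1) hx1S hx1
        have hne : w (x % b + 1) ≠ f := fun hh => hfS (hh ▸ hvS)
        exact Or.inl ⟨by omega, h1b', by omega⟩
end

section
/- Let m, f ∈ ℕ with 0 < m < f and f not a multiple of m. Then S = {0, m, 2m, …, ⌊f/m⌋·m} ∪ {x ∈ ℕ : x > f} = ⟨m⟩ ∪ Δ(f) is an A-numerical semigroup with Frobenius number f and multiplicity m, and its genus (number of gaps) equals f − ⌊f/m⌋. -/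
lemma memS (m f x : ℕ) : x ∈ ({x | m ∣ x} ∪ Delta f) ↔ m ∣ x ∨ x = 0 ∨ f < x := by
  simp [Delta, Set.mem_union, Set.mem_setOf_eq]
  tauto

theorem stmt7 (m f : ℕ) (hm : 0 < m) (hmf : m < f) (hnd : ¬ m ∣ f) :
    IsNumSgp ({x | m ∣ x} ∪ Delta f) ∧ IsFrob ({x | m ∣ x} ∪ Delta f) f ∧
    IsASgp ({x | m ∣ x} ∪ Delta f) f ∧ IsMult ({x | m ∣ x} ∪ Delta f) m ∧
    (({x | m ∣ x} ∪ Delta f)ᶜ : Set ℕ).ncard = f - f / m := by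
  set S := ({x | m ∣ x} ∪ Delta f) with hS
  have hm2 : 2 ≤ m := by
    have h1 : m ≠ 1 := by
      rintro rfl
      exact hnd (one_dvd f)
    omega
  have hcompl : Sᶜ = ↑((Finset.Ioc 0 f).filter (fun x => ¬ m ∣ x)) := by
    ext x
    rw [Set.mem_compl_iff, hS, memS]
    simp only [Finset.coe_filter, Finset.mem_Ioc, Set.mem_setOf_eq]
    constructor
    · intro h
      push_neg at h
      exact ⟨⟨by omega, by omega⟩, h.1⟩
    · rintro ⟨⟨h1, h2⟩, h3⟩
      push_neg
      exact ⟨h3, by omega, by omega⟩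
  refine ⟨⟨?_, ?_, ?_⟩, ⟨?_, ?_⟩, ?_, ⟨?_, ?_, ?_⟩, ?_⟩
  · rw [memS]; left; exact dvd_zero m
  · intro a ha b hb
    rw [memS] at ha hb ⊢
    rcases ha with ha | ha | ha
    · rcases hb with hb | hb | hb
      · exact Or.inl (Dvd.dvd.add ha hb)
      · subst hb; exact Or.inl (by simpa using ha)
      · right; right; omega
    · subst ha; simpa using hb
    · right; right; omega
  · rw [hcompl]; exact Finset.finite_toSet _
  · rw [memS]; push_neg; exact ⟨hnd, by omega, by omega⟩
  · intro x hx; rw [memS] at hx; push_neg at hx; omega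
  · rintro ⟨x, hx, hx1, hx2⟩
    rw [memS] at hx1 hx2
    have : ¬ f < x := by omega
    have : ¬ f < x + 1 := by omega
    have d1 : m ∣ x := by
      rcases hx1 with h | h | h
      · exact h
      · simp [h]
      · omega
    have d2 : m ∣ x + 1 := by
      rcases hx2 with h | h | h
      · exact h
      · omega
      · omega
    have hd : m ∣ 1 := by simpa using Nat.dvd_sub d2 d1
    have := Nat.le_of_dvd one_pos hd
    omega
  · rw [memS]; left; exact dvd_refl m
  · omega
  · intro x hx hx0; rw [memS] at hx
    rcases hx with h | h | h
    · exact Nat.le_of_dvd (Nat.pos_of_ne_zero hx0) h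
    · omega
    · omega
  · rw [hcompl, Set.ncard_coe_finset]
    have h1 := Finset.card_filter_add_card_filter_not
      (s := Finset.Ioc 0 f) (p := fun x => m ∣ x)
    have h2 : ((Finset.Ioc 0 f).filter (fun x => m ∣ x)).card = f / m :=
      Nat.Ioc_filter_dvd_card_eq_div f m
    have h3 : (Finset.Ioc 0 f).card = f := by simp
    omega
end

section
/- Let m, r, f ∈ ℕ with 3 ≤ m < r < f, gcd(m, r) = 1, f ∉ ⟨m, r⟩, and suppose the set X = {λr mod m : 1 ≤ λ ≤ ⌊(f−1)/r⌋} ∪ {0, m} contains no two consecutive integers. Then S = ⟨m, r⟩ ∪ {x ∈ ℕ : x > f} is an A-numerical semigroup with Frobenius number f, multiplicity m, and ratio r. -/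
theorem stmt9 (m r f : ℕ) (h3 : 3 ≤ m) (hmr : m < r) (hrf : r < f)
    (hgcd : Nat.gcd m r = 1)
    (hfnot : ¬ ∃ a b : ℕ, f = a * m + b * r)
    (hX : ∀ i, i ∈ ({x | ∃ l, 1 ≤ l ∧ l ≤ (f - 1) / r ∧ x = (l * r) % m} ∪ {0, m} : Set ℕ) →
      i + 1 ∉ ({x | ∃ l, 1 ≤ l ∧ l ≤ (f - 1) / r ∧ x = (l * r) % m} ∪ {0, m} : Set ℕ)) :
    IsNumSgp ({x | ∃ a b : ℕ, x = a * m + b * r} ∪ {x | f < x}) ∧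
    IsFrob ({x | ∃ a b : ℕ, x = a * m + b * r} ∪ {x | f < x}) f ∧
    IsASgp ({x | ∃ a b : ℕ, x = a * m + b * r} ∪ {x | f < x}) f ∧
    IsMult ({x | ∃ a b : ℕ, x = a * m + b * r} ∪ {x | f < x}) m ∧
    (r ∈ ({x | ∃ a b : ℕ, x = a * m + b * r} ∪ {x | f < x} : Set ℕ) ∧ ¬ m ∣ r ∧
      ∀ x ∈ ({x | ∃ a b : ℕ, x = a * m + b * r} ∪ {x | f < x} : Set ℕ), ¬ m ∣ x → r ≤ x) := by
  have hm0 : 0 < m := by omega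
  have hr0 : 0 < r := by omega
  have hmX : m ∈ ({x | ∃ l, 1 ≤ l ∧ l ≤ (f - 1) / r ∧ x = (l * r) % m} ∪ {0, m} : Set ℕ) := by
    right; right; rfl
  -- every representable y ≤ f-1 has residue in X
  have hresX : ∀ y : ℕ, y ≤ f - 1 → (∃ a b : ℕ, y = a * m + b * r) →
      y % m ∈ ({x | ∃ l, 1 ≤ l ∧ l ≤ (f - 1) / r ∧ x = (l * r) % m} ∪ {0, m} : Set ℕ) := by
    rintro y hy ⟨a, b, rfl⟩
    rcases Nat.eq_zero_or_pos b with rfl | hb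
    · right; left
      simp [Nat.mul_mod_left]
    · left
      refine ⟨b, hb, ?_, ?_⟩
      · rw [Nat.le_div_iff_mul_le hr0]
        calc b * r ≤ a * m + b * r := Nat.le_add_left _ _
          _ ≤ f - 1 := hy
      · rw [Nat.add_comm, Nat.add_mul_mod_self_right]
  refine ⟨⟨Or.inl ⟨0, 0, by ring⟩, ?_, ?_⟩, ⟨?_, ?_⟩, ?_, ⟨Or.inl ⟨1, 0, by ring⟩, by omega, ?_⟩,
    Or.inl ⟨0, 1, by ring⟩, ?_, ?_⟩
  · -- closed under addition
    rintro a (⟨a1, b1, rfl⟩ | ha) b hb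
    · rcases hb with ⟨a2, b2, rfl⟩ | hb
      · exact Or.inl ⟨a1 + a2, b1 + b2, by ring⟩
      · right; simp only [Set.mem_setOf_eq] at hb ⊢; omega
    · right; simp only [Set.mem_setOf_eq] at ha ⊢; omega
  · -- cofinite
    apply Set.Finite.subset (Set.finite_Iic f)
    intro x hx
    simp only [Set.mem_compl_iff, Set.mem_union, Set.mem_setOf_eq] at hx
    simp only [Set.mem_Iic]
    omega
  · -- f ∉ S
    rintro (⟨a, b, h⟩ | h)
    · exact hfnot ⟨a, b, h⟩
    · simp only [Set.mem_setOf_eq] at h; omega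
  · -- x ∉ S → x ≤ f
    intro x hx
    by_contra h
    exact hx (Or.inr (by simpa using by omega))
  · -- A-semigroup
    rintro ⟨x, hxf, hxS, hx1S⟩
    have hxG : ∃ a b : ℕ, x = a * m + b * r := by
      rcases hxS with h | h
      · exact h
      · simp only [Set.mem_setOf_eq] at h; omega
    have hx1G : ∃ a b : ℕ, x + 1 = a * m + b * r := by
      rcases hx1S with h | h
      · exact h
      · simp only [Set.mem_setOf_eq] at h; omega
    have hne : x + 1 ≠ f := by
      rintro h
      obtain ⟨a, b, hab⟩ := hx1G
      exact hfnot ⟨a, b, h ▸ hab⟩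
    have hi := hresX x (by omega) hxG
    have hi1 := hresX (x + 1) (by omega) hx1G
    have hnot := hX _ hi
    have hlt : x % m < m := Nat.mod_lt _ hm0
    have h1 : x % m + 1 < m := by
      rcases Nat.lt_or_ge (x % m + 1) m with h | h
      · exact h
      · exact absurd (show x % m + 1 ∈ _ by rw [show x % m + 1 = m by omega]; exact hmX) hnot
    have heq : (x + 1) % m = x % m + 1 := by
      conv_lhs => rw [Nat.add_mod]
      rw [Nat.mod_eq_of_lt (show 1 < m by omega), Nat.mod_eq_of_lt h1]
    exact hnot (heq ▸ hi1)
  · -- multiplicity lower bound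
    rintro x (⟨a, b, rfl⟩ | hx) hne
    · rcases Nat.eq_zero_or_pos a with rfl | ha
      · rcases Nat.eq_zero_or_pos b with rfl | hb
        · simp at hne
        · have : r ≤ b * r := Nat.le_mul_of_pos_left r hb
          omega
      · have : m ≤ a * m := Nat.le_mul_of_pos_left m ha
        omega
    · simp only [Set.mem_setOf_eq] at hx; omega
  · -- ¬ m ∣ r
    intro hd
    have := Nat.le_of_dvd one_pos (hgcd ▸ Nat.dvd_gcd dvd_rfl hd)
    omega
  · -- ratio lower bound
    rintro x (⟨a, b, rfl⟩ | hx) hnd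
    · rcases Nat.eq_zero_or_pos b with rfl | hb
      · exact absurd ⟨a, by ring⟩ hnd
      · have : r ≤ b * r := Nat.le_mul_of_pos_left r hb
        omega
    · simp only [Set.mem_setOf_eq] at hx; omega
end

section
/- Every Arf numerical semigroup is an A-semigroup: if S is a numerical semigroup such that x + y − z ∈ S whenever x, y, z ∈ S with x ≥ y ≥ z, then S contains no pair {x, x+1} with both elements smaller than Fb(S). -/
theorem stmt13 (S : Set ℕ) (f : ℕ) (hS : IsNumSgp S) (hf : IsFrob S f)
    (hArf : ∀ x ∈ S, ∀ y ∈ S, ∀ z ∈ S, z ≤ y → y ≤ x → x + y - z ∈ S) :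
    IsASgp S f := by
  rintro ⟨x, hxf, hx, hx1⟩
  have key : ∀ k, x + k ∈ S := by
    intro k
    induction k with
    | zero => simpa using hx
    | succ n ih =>
      rcases Nat.eq_zero_or_pos n with h | h
      · subst h; simpa using hx1
      · have := hArf (x + n) ih (x + 1) hx1 x hx (by omega) (by omega)
        have e : x + n + (x + 1) - x = x + (n + 1) := by omega
        rwa [e] at this
  have := key (f - x)
  have e : x + (f - x) = f := by omega
  rw [e] at this
  exact hf.1 this
end

section
/- Let f, m ∈ ℕ with 0 < m, f ∉ ⟨m⟩, and f < 2m. The A-numerical semigroups with Frobenius number f and multiplicity m are exactly the sets {0, m} ∪ A ∪ {x : x > f}, where A ranges over subsets of {x : m < x < f} containing no two consecutive integers and not containing m + 1. -/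
theorem stmt15 (f m : ℕ) (hm : 0 < m) (hmf : m < f) (hnd : ¬ m ∣ f) (h2m : f < 2 * m)
    (S : Set ℕ) :
    (IsNumSgp S ∧ IsFrob S f ∧ IsASgp S f ∧ IsMult S m) ↔
      ∃ A : Set ℕ, A ⊆ {x | m < x ∧ x < f} ∧ (∀ x ∈ A, x + 1 ∉ A) ∧ m + 1 ∉ A ∧
        S = {0, m} ∪ A ∪ {x | f < x} := by
  constructor
  · rintro ⟨⟨h0, hadd, hfin⟩, ⟨hfS, hmax⟩, hA, hmS, hm0, hmin⟩
    refine ⟨S ∩ {x | m < x ∧ x < f}, Set.inter_subset_right, ?_, ?_, ?_⟩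
    · rintro x ⟨hxS, hxm, hxf⟩ ⟨hx1S, -, -⟩
      exact hA ⟨x, hxf, hxS, hx1S⟩
    · rintro ⟨hS, -, -⟩
      exact hA ⟨m, hmf, hmS, hS⟩
    · ext x
      simp only [Set.mem_union, Set.mem_insert_iff, Set.mem_singleton_iff, Set.mem_inter_iff,
        Set.mem_setOf_eq]
      constructor
      · intro hx
        rcases eq_or_ne x 0 with h | h
        · exact Or.inl (Or.inl (Or.inl h))
        rcases lt_trichotomy x f with hf | hf | hf
        · have hmx := hmin x hx h
          rcases eq_or_lt_of_le hmx with h' | h'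
          · exact Or.inl (Or.inl (Or.inr h'.symm))
          · exact Or.inl (Or.inr ⟨hx, h', hf⟩)
        · exact absurd (hf ▸ hx) hfS
        · exact Or.inr hf
      · rintro (((rfl | rfl) | ⟨h, -, -⟩) | h)
        · exact h0
        · exact hmS
        · exact h
        · by_contra hc
          exact absurd (hmax x hc) (not_le.mpr h)
  · rintro ⟨A, hAsub, hAcons, hAm1, rfl⟩
    have hmemA : ∀ x ∈ A, m < x ∧ x < f := fun x hx => hAsub hx
    have hS : ∀ x, x ∈ ({0, m} : Set ℕ) ∪ A ∪ {x | f < x} ↔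
        x = 0 ∨ x = m ∨ x ∈ A ∨ f < x := by
      intro x
      simp [Set.mem_union, Set.mem_insert_iff, or_assoc]
    refine ⟨⟨?_, ?_, ?_⟩, ⟨?_, ?_⟩, ?_, ?_, hm.ne', ?_⟩
    · exact (hS 0).mpr (Or.inl rfl)
    · have key : ∀ x ∈ ({0, m} : Set ℕ) ∪ A ∪ {x | f < x}, x = 0 ∨ m ≤ x := by
        intro x hx
        rcases (hS x).mp hx with rfl | rfl | h' | h'
        · exact Or.inl rfl
        · exact Or.inr le_rfl
        · exact Or.inr (hmemA x h').1.le
        · omega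
      intro a ha b hb
      rcases key a ha with rfl | ha'
      · simpa using hb
      rcases key b hb with rfl | hb'
      · simpa using ha
      exact (hS _).mpr (Or.inr (Or.inr (Or.inr (by omega))))
    · apply Set.Finite.subset (Set.finite_Icc 0 f)
      intro x hx
      simp only [Set.mem_compl_iff, hS] at hx
      push_neg at hx
      exact ⟨Nat.zero_le x, by omega⟩
    · intro h
      rcases (hS f).mp h with h' | h' | h' | h'
      · omega
      · omega
      · exact absurd (hmemA f h').2 (lt_irrefl f)
      · omega
    · intro x hx
      by_contra hc
      exact hx ((hS x).mpr (Or.inr (Or.inr (Or.inr (not_le.mp hc)))))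
    · rintro ⟨x, hxf, hxS, hx1S⟩
      rcases (hS x).mp hxS with rfl | hxm | h' | h'
      · rcases (hS 1).mp hx1S with h'' | h'' | h'' | h''
        · omega
        · omega
        · exact absurd (hmemA 1 h'').1 (by omega)
        · omega
      · rcases (hS (x+1)).mp hx1S with h'' | h'' | h'' | h''
        · omega
        · omega
        · exact hAm1 (by rw [← hxm]; exact h'')
        · omega
      · have hx := hmemA x h'
        rcases (hS (x+1)).mp hx1S with h'' | h'' | h'' | h''
        · omega
        · omega
        · exact hAcons x h' h''
        · omega
      · omega
    · exact (hS m).mpr (Or.inr (Or.inl rfl))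
    · intro x hx hx0
      rcases (hS x).mp hx with rfl | rfl | h' | h'
      · omega
      · omega
      · exact (hmemA x h').1.le
      · omega
end

section
/- Let S be a numerical semigroup with multiplicity m and Frobenius number f satisfying f > 2m, and let Υ = {x ∈ ℕ : f − m − 1 < x < f}. Then S is an A-semigroup if and only if (1) for all x with x, x+1 ∈ Υ, not both x ∈ S and x+1 ∈ S, and (2) if f − m − 1 ∈ S then f − m ∉ S. -/
theorem stmt16 (S : Set ℕ) (m f : ℕ)
    (hS : IsNumSgp S) (hm : IsMult S m) (hf : IsFrob S f) (h2m : 2 * m < f) :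
    IsASgp S f ↔
      ((∀ x, f - m - 1 < x → x < f → f - m - 1 < x + 1 → x + 1 < f →
          ¬ (x ∈ S ∧ x + 1 ∈ S)) ∧
        (f - m - 1 ∈ S → f - m ∉ S)) := by
  obtain ⟨hmS, hm0, hmin⟩ := hm
  have hm1 : 1 ≤ m := Nat.one_le_iff_ne_zero.2 hm0
  constructor
  · intro hA
    refine ⟨fun x _ hxf _ _ ⟨h1, h2⟩ => hA ⟨x, hxf, h1, h2⟩, fun h1 h2 => ?_⟩
    apply hA
    refine ⟨f - m - 1, by omega, h1, ?_⟩
    have : f - m - 1 + 1 = f - m := by omega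
    rwa [this]
  · rintro ⟨hc1, hc2⟩ ⟨x, hxf, hx1, hx2⟩
    -- strong induction on f - x
    have key : ∀ k x, f - x ≤ k → x < f → x ∈ S → x + 1 ∈ S → False := by
      intro k
      induction k with
      | zero => intro x h1 h2 _ _; omega
      | succ k ih =>
        intro x hk hxf hx1 hx2
        have hx1f : x + 1 < f := by
          rcases Nat.lt_or_ge (x+1) f with h | h
          · exact h
          · have : x + 1 = f := by omega
            exact absurd (this ▸ hx2) hf.1
        rcases Nat.lt_trichotomy x (f - m - 1) with h | h | h
        · have hs1 : x + m ∈ S := hS.2.1 x hx1 m hmS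
          have hs2 : x + m + 1 ∈ S := by
            have := hS.2.1 (x+1) hx2 m hmS
            simpa [Nat.add_right_comm] using this
          exact ih (x + m) (by omega) (by omega) hs1 hs2
        · apply hc2 (h ▸ hx1)
          have : f - m - 1 + 1 = f - m := by omega
          rw [← this, ← h]; exact hx2
        · exact hc1 x h hxf (by omega) hx1f ⟨hx1, hx2⟩
    exact key (f - x) x le_rfl hxf hx1 hx2
end

section
/- Let f ∈ ℕ with f > 0, and let S be an A-numerical semigroup with Frobenius number f. Then the set X = N(S) ∩ msg(S) of minimal generators of S that are smaller than f is the unique minimal set among all sets Y ⊆ S \ (Δ(f)) such that S is the intersection of all A-numerical semigroups with Frobenius number f containing Y. -/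
/-- The minimal generating set of a numerical semigroup. -/
def msg (S : Set ℕ) : Set ℕ :=
  {a | a ∈ S ∧ a ≠ 0 ∧ ¬ ∃ x ∈ S, ∃ y ∈ S, x ≠ 0 ∧ y ≠ 0 ∧ a = x + y}

/-- Intersection of all A-numerical semigroups with Frobenius number f containing Y. -/
def AClosure (f : ℕ) (Y : Set ℕ) : Set ℕ :=
  {n | ∀ T : Set ℕ, IsNumSgp T → IsFrob T f → IsASgp T f → Y ⊆ T → n ∈ T}

theorem stmt17 (f : ℕ) (hf : 0 < f) (S : Set ℕ)
    (hS : IsNumSgp S) (hfS : IsFrob S f) (hA : IsASgp S f) :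
    ({s | s ∈ msg S ∧ s < f} ⊆ S \ Delta f) ∧
    AClosure f {s | s ∈ msg S ∧ s < f} = S ∧
    (∀ Y ⊆ S \ Delta f, AClosure f Y = S → {s | s ∈ msg S ∧ s < f} ⊆ Y) := by
  obtain ⟨hS0, hSadd, hSfin⟩ := hS
  obtain ⟨hfnS, hfmax⟩ := hfS
  have hsub : ({s | s ∈ msg S ∧ s < f} : Set ℕ) ⊆ S \ Delta f := by
    rintro x ⟨⟨hxS, hx0, _⟩, hxf⟩
    refine ⟨hxS, ?_⟩
    simp only [Delta, Set.mem_union, Set.mem_singleton_iff, Set.mem_setOf_eq]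
    push_neg
    exact ⟨hx0, le_of_lt hxf⟩
  have key : ∀ T : Set ℕ, IsNumSgp T →
      ({s | s ∈ msg S ∧ s < f} : Set ℕ) ⊆ T → ∀ s ∈ S, s < f → s ∈ T := by
    intro T hT hXT s
    induction s using Nat.strong_induction_on with
    | _ s ih =>
      intro hsS hsf
      rcases Nat.eq_zero_or_pos s with rfl | hs0
      · exact hT.1
      by_cases hm : s ∈ msg S
      · exact hXT ⟨hm, hsf⟩
      · have hdec : ∃ x ∈ S, ∃ y ∈ S, x ≠ 0 ∧ y ≠ 0 ∧ s = x + y := by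
          by_contra h
          exact hm ⟨hsS, hs0.ne', h⟩
        obtain ⟨x, hxS, y, hyS, hx0, hy0, rfl⟩ := hdec
        have hx : x < x + y := Nat.lt_add_of_pos_right (Nat.pos_of_ne_zero hy0)
        have hy : y < x + y := Nat.lt_add_of_pos_left (Nat.pos_of_ne_zero hx0)
        exact hT.2.1 x (ih x hx hxS (hx.trans hsf)) y (ih y hy hyS (hy.trans hsf))
  have hcl : AClosure f {s | s ∈ msg S ∧ s < f} = S := by
    ext n
    constructor
    · intro hn
      exact hn S ⟨hS0, hSadd, hSfin⟩ ⟨hfnS, hfmax⟩ hA (fun x hx => (hsub hx).1)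
    · intro hn T hT hTF hTA hXT
      by_cases hnf : n < f
      · exact key T hT hXT n hn hnf
      · by_contra hnT
        have hne : n = f := le_antisymm (hTF.2 n hnT) (not_lt.mp hnf)
        exact hfnS (hne ▸ hn)
  refine ⟨hsub, hcl, ?_⟩
  intro Y hY hYcl x hx
  obtain ⟨hxmsg, hxf⟩ := hx
  obtain ⟨hxS, hx0, hxnd⟩ := hxmsg
  by_contra hxY
  have hT : IsNumSgp (S \ {x}) := by
    refine ⟨⟨hS0, fun h => hx0 (h.symm)⟩, ?_, ?_⟩
    · rintro a ⟨haS, hax⟩ b ⟨hbS, hbx⟩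
      refine ⟨hSadd a haS b hbS, ?_⟩
      intro hab
      simp only [Set.mem_singleton_iff] at hab hax hbx
      rcases Nat.eq_zero_or_pos a with rfl | ha0
      · exact hbx (by simpa using hab)
      rcases Nat.eq_zero_or_pos b with rfl | hb0
      · exact hax (by simpa using hab)
      exact hxnd ⟨a, haS, b, hbS, ha0.ne', hb0.ne', hab.symm⟩
    · have : (S \ {x})ᶜ ⊆ Sᶜ ∪ {x} := by
        intro z hz
        simp only [Set.mem_compl_iff, Set.mem_diff, not_and, not_not] at hz
        by_cases hzS : z ∈ S
        · exact Or.inr (hz hzS)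
        · exact Or.inl hzS
      exact (hSfin.union (Set.finite_singleton x)).subset this
  have hTF : IsFrob (S \ {x}) f := by
    refine ⟨fun h => hfnS h.1, ?_⟩
    intro z hz
    by_cases hzS : z ∈ S
    · have : z = x := by
        by_contra hne
        exact hz ⟨hzS, hne⟩
      exact this ▸ le_of_lt hxf
    · exact hfmax z hzS
  have hTA : IsASgp (S \ {x}) f := by
    rintro ⟨z, hzf, hz1, hz2⟩
    exact hA ⟨z, hzf, hz1.1, hz2.1⟩
  have hYT : Y ⊆ S \ {x} := by
    intro y hy
    exact ⟨(hY hy).1, fun h => hxY (h ▸ hy)⟩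
  have : x ∈ AClosure f Y := hYcl.symm ▸ hxS
  exact (this (S \ {x}) hT hTF hTA hYT).2 rfl
end

section
/- Let f ∈ ℕ, f > 0. An A-numerical semigroup S with Frobenius number f satisfies A(f)-rank zero if and only if S = Δ(f) = {0} ∪ {x : x > f}; and S has A(f)-rank one if and only if S = ⟨m⟩ ∪ Δ(f) for some m with 1 < m < f and f not a multiple of m. -/
lemma aux_mul_mem (S : Set ℕ) (h0 : 0 ∈ S) (hadd : ∀ a ∈ S, ∀ b ∈ S, a + b ∈ S)
    (m : ℕ) (hm : m ∈ S) : ∀ k, k * m ∈ S := by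
  intro k
  induction k with
  | zero => simpa using h0
  | succ n ih => rw [Nat.succ_mul]; exact hadd _ ih _ hm

lemma aux_below (S : Set ℕ) (f m : ℕ)
    (hset : {s | s ∈ msg S ∧ s < f} = {m}) :
    ∀ s ∈ S, s < f → s ≠ 0 → m ∣ s := by
  intro s
  induction s using Nat.strong_induction_on with
  | _ s ih =>
    intro hs hsf hs0
    by_cases hmsg : s ∈ msg S
    · have : s ∈ ({m} : Set ℕ) := by rw [← hset]; exact ⟨hmsg, hsf⟩
      simp at this; subst this; exact dvd_refl _
    · simp only [msg, Set.mem_setOf_eq, not_and, not_not] at hmsg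
      obtain ⟨x, hx, y, hy, hx0, hy0, hxy⟩ := hmsg hs hs0
      have hxs : x < s := by omega
      have hys : y < s := by omega
      have := ih x hxs hx (by omega) hx0
      have := ih y hys hy (by omega) hy0
      subst hxy; exact dvd_add ‹m ∣ x› ‹m ∣ y›

theorem stmt18 (f : ℕ) (hf : 0 < f) (S : Set ℕ)
    (hS : IsNumSgp S) (hfS : IsFrob S f) (hA : IsASgp S f) :
    (({s | s ∈ msg S ∧ s < f}).ncard = 0 ↔ S = Delta f) ∧
    (({s | s ∈ msg S ∧ s < f}).ncard = 1 ↔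
      ∃ m : ℕ, 1 < m ∧ m < f ∧ ¬ m ∣ f ∧ S = {x | m ∣ x} ∪ Delta f) := by
  obtain ⟨h0, hadd, hcof⟩ := hS
  obtain ⟨hfnot, hfmax⟩ := hfS
  have hfin : ({s | s ∈ msg S ∧ s < f}).Finite :=
    (Set.finite_lt_nat f).subset (fun x hx => hx.2)
  have hDsub : Delta f ⊆ S := by
    rintro x (hx | hx)
    · simp at hx; subst hx; exact h0
    · by_contra hxS
      exact absurd (hfmax x hxS) (by simp at hx ⊢; omega)
  -- minimal nonzero element below f is in msg, if one exists
  classical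
  have hmin : ∀ s ∈ S, s ≠ 0 → s < f →
      ∃ t, t ∈ msg S ∧ t < f := by
    intro s hs hs0 hsf
    have hex : ∃ t, t ∈ S ∧ t ≠ 0 ∧ t < f := ⟨s, hs, hs0, hsf⟩
    obtain ⟨ht, ht0, htf⟩ := Nat.find_spec hex
    refine ⟨Nat.find hex, ⟨ht, ht0, ?_⟩, htf⟩
    rintro ⟨x, hx, y, hy, hx0, hy0, hxy⟩
    have hxf : x < f := by omega
    have : Nat.find hex ≤ x := Nat.find_le ⟨hx, hx0, hxf⟩
    omega
  constructor
  · constructor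
    · intro hcard
      have hempty : {s | s ∈ msg S ∧ s < f} = ∅ := (Set.ncard_eq_zero hfin).mp hcard
      apply Set.Subset.antisymm _ hDsub
      intro s hs
      by_cases hs0 : s = 0
      · left; simp [hs0]
      · right
        by_contra hsf
        simp at hsf
        have hsltf : s < f := lt_of_le_of_ne hsf (fun h => hfnot (h ▸ hs))
        obtain ⟨t, htm, htf⟩ := hmin s hs hs0 hsltf
        exact absurd (Set.eq_empty_iff_forall_notMem.mp hempty t) (by simp [htm, htf])
    · intro hSD
      rw [Set.ncard_eq_zero hfin, Set.eq_empty_iff_forall_notMem]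
      rintro t ⟨⟨ht, ht0, _⟩, htf⟩
      rw [hSD] at ht
      rcases ht with h | h
      · simp at h; exact ht0 h
      · simp at h; omega
  · constructor
    · intro hcard
      obtain ⟨m, hm⟩ := Set.ncard_eq_one.mp hcard
      have hmmem : m ∈ {s | s ∈ msg S ∧ s < f} := by rw [hm]; rfl
      obtain ⟨⟨hmS, hm0, hmind⟩, hmf⟩ := hmmem
      have hm1 : 1 < m := by
        rcases Nat.lt_or_ge m 2 with h | h
        · interval_cases m
          · omega
          · exact absurd ⟨1, hmf, hmS, hadd 1 hmS 1 hmS⟩ hA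
        · omega
      have hdvd : ∀ s ∈ S, s < f → s ≠ 0 → m ∣ s := aux_below S f m hm
      have hmul : ∀ k, k * m ∈ S := aux_mul_mem S h0 hadd m hmS
      have hnd : ¬ m ∣ f := by
        rintro ⟨k, rfl⟩
        exact hfnot (by rw [mul_comm]; exact hmul k)
      refine ⟨m, hm1, hmf, hnd, ?_⟩
      ext x
      constructor
      · intro hx
        by_cases hx0 : x = 0
        · right; left; simp [hx0]
        · by_cases hxf : f < x
          · right; right; exact hxf
          · have hxlt : x < f := lt_of_le_of_ne (by omega) (fun h => hfnot (h ▸ hx))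
            exact Or.inl (hdvd x hx hxlt hx0)
      · rintro (hx | hx)
        · obtain ⟨k, rfl⟩ := hx
          rw [mul_comm]; exact hmul k
        · exact hDsub hx
    · rintro ⟨m, hm1, hmf, hnd, rfl⟩
      rw [Set.ncard_eq_one]
      refine ⟨m, ?_⟩
      have hmem : ∀ x, x ∈ ({y | m ∣ y} ∪ Delta f : Set ℕ) ↔ (m ∣ x ∨ x = 0 ∨ f < x) := by
        intro x; simp [Delta, Set.mem_union]; tauto
      have hmgen : m ∈ msg ({x | m ∣ x} ∪ Delta f) ∧ m < f := by
        refine ⟨⟨(hmem m).mpr (Or.inl (dvd_refl m)), by omega, ?_⟩, hmf⟩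
        rintro ⟨x, hx, y, hy, hx0, hy0, hxy⟩
        have hxm : m ≤ x := by
          rcases (hmem x).mp hx with h | h | h
          · exact Nat.le_of_dvd (by omega) h
          · omega
          · omega
        have hym : m ≤ y := by
          rcases (hmem y).mp hy with h | h | h
          · exact Nat.le_of_dvd (by omega) h
          · omega
          · omega
        omega
      ext t
      simp only [Set.mem_setOf_eq, Set.mem_singleton_iff]
      constructor
      · rintro ⟨⟨ht, ht0, htind⟩, htf⟩
        rcases (hmem t).mp ht with h | h | h
        · -- t multiple of m, t < f
          obtain ⟨k, rfl⟩ := h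
          rcases Nat.lt_or_ge k 2 with hk | hk
          · interval_cases k <;> simp_all
          · exfalso
            obtain ⟨j, rfl⟩ : ∃ j, k = j + 2 := ⟨k - 2, by omega⟩
            exact htind ⟨m, (hmem m).mpr (Or.inl (dvd_refl m)), m * (j + 1),
              (hmem _).mpr (Or.inl ⟨j + 1, rfl⟩), by omega,
              Nat.mul_ne_zero (by omega) (by omega), by ring⟩
        · omega
        · omega
      · intro ht; rw [ht]; exact hmgen
end

section
/- Let S be an A-numerical semigroup with Frobenius number f whose set of minimal generators below f is exactly {m, r} with m < r (A(f)-rank two). Then S = ⟨m, r⟩ ∪ {x : x > f}, r < f, f ∉ ⟨m, r⟩, and Ap(S, m) is the disjoint union of B = {λr : 0 ≤ λ ≤ l} and {f + i : 1 ≤ i ≤ m, f + i ≢ b (mod m) for all b ∈ B}, where l = ⌊(f−1)/r⌋ if gcd(m,r) = 1, and l = max{k ∈ {1,…,m/gcd(m,r) − 1} : kr < f} otherwise. -/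
private lemma aux19_mrsub {m r : ℕ} (hm : 2 ≤ m) (hr : 2 ≤ r) (hco : Nat.gcd m r = 1) :
    ∃ c e : ℕ, m * r - 1 = c * m + e * r := by
  haveI : NeZero m := ⟨by omega⟩
  have hu : IsUnit (r : ZMod m) := by
    rw [ZMod.isUnit_iff_coprime]
    exact Nat.coprime_comm.mp hco
  set e := ((r : ZMod m)⁻¹ * (-1)).val with he
  have helt : e < m := ZMod.val_lt _
  have hdvd : m ∣ e * r + 1 := by
    have : (((e * r + 1 : ℕ)) : ZMod m) = 0 := by
      push_cast
      rw [he, ZMod.natCast_val, ZMod.cast_id]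
      rw [mul_comm _ (-1 : ZMod m), mul_assoc, ZMod.inv_mul_of_unit _ hu]
      ring
    exact (ZMod.natCast_eq_zero_iff _ _).mp this
  obtain ⟨c', hc'⟩ := hdvd
  have hc'1 : 1 ≤ c' := by
    rcases Nat.eq_zero_or_pos c' with h | h
    · simp [h] at hc'
    · exact h
  have hc'r : c' < r := by
    have h1 : m * c' ≤ (m - 1) * r + 1 := by
      rw [← hc']
      have : e * r ≤ (m - 1) * r := Nat.mul_le_mul_right _ (by omega)
      omega
    have h2 : (m - 1) * r + 1 < m * r := by
      have : (m - 1) * r + r = m * r := by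
        rw [← Nat.add_one_mul]; congr 1; omega
      omega
    have : m * c' < m * r := lt_of_le_of_lt h1 h2
    exact Nat.lt_of_mul_lt_mul_left this
  refine ⟨r - c', e, ?_⟩
  have key : (r - c') * m + e * r + 1 = m * r := by
    calc (r - c') * m + e * r + 1 = (r - c') * m + m * c' := by rw [add_assoc, hc']
    _ = ((r - c') + c') * m := by ring
    _ = r * m := by rw [Nat.sub_add_cancel hc'r.le]
    _ = m * r := mul_comm _ _
  exact Nat.sub_eq_of_eq_add key.symm

theorem stmt19 (S : Set ℕ) (f m r : ℕ)
    (hS : IsNumSgp S) (hfS : IsFrob S f) (hA : IsASgp S f)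
    (hmr : m < r) (hmsg : {s | s ∈ msg S ∧ s < f} = {m, r}) :
    S = ({x | ∃ a b : ℕ, x = a * m + b * r} ∪ {x | f < x}) ∧
    r < f ∧ (¬ ∃ a b : ℕ, f = a * m + b * r) ∧
    ∃ l : ℕ,
      ((Nat.gcd m r = 1 ∧ l = (f - 1) / r) ∨
        (Nat.gcd m r ≠ 1 ∧
          (1 ≤ l ∧ l ≤ m / Nat.gcd m r - 1 ∧ l * r < f) ∧
          ∀ k, 1 ≤ k → k ≤ m / Nat.gcd m r - 1 → k * r < f → k ≤ l)) ∧
      Ap S m =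
        ({x | ∃ i ≤ l, x = i * r} ∪
          {x | ∃ i, 1 ≤ i ∧ i ≤ m ∧ x = f + i ∧
            ∀ j ≤ l, (f + i) % m ≠ (j * r) % m}) ∧
      Disjoint ({x | ∃ i ≤ l, x = i * r} : Set ℕ)
        ({x | ∃ i, 1 ≤ i ∧ i ≤ m ∧ x = f + i ∧
          ∀ j ≤ l, (f + i) % m ≠ (j * r) % m} : Set ℕ) := by
  obtain ⟨h0S, hadd, _hfin⟩ := hS
  obtain ⟨hfnS, hfmax⟩ := hfS
  -- basic facts about m and r
  have hmm : m ∈ msg S ∧ m < f := by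
    have h1 : m ∈ ({m, r} : Set ℕ) := Set.mem_insert _ _
    rw [← hmsg] at h1
    exact h1
  have hrm : r ∈ msg S ∧ r < f := by
    have h1 : r ∈ ({m, r} : Set ℕ) := Set.mem_insert_iff.mpr (Or.inr rfl)
    rw [← hmsg] at h1
    exact h1
  have hmS : m ∈ S := hmm.1.1
  have hrS : r ∈ S := hrm.1.1
  have hm0 : m ≠ 0 := hmm.1.2.1
  have hr0 : r ≠ 0 := hrm.1.2.1
  have hmf : m < f := hmm.2
  have hrf : r < f := hrm.2
  -- generated elements are in S
  have hgen : ∀ a b : ℕ, a * m + b * r ∈ S := by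
    have hmul : ∀ x, x ∈ S → ∀ a : ℕ, a * x ∈ S := by
      intro x hx a
      induction a with
      | zero => simpa using h0S
      | succ n ih => have := hadd _ ih _ hx; simpa [Nat.succ_mul] using this
    intro a b
    exact hadd _ (hmul m hmS a) _ (hmul r hrS b)
  have hSgt : ∀ x, f < x → x ∈ S := by
    intro x hx
    by_contra h
    exact absurd (hfmax x h) (by omega)
  -- elements of S below f are generated by m and r
  have hbelow : ∀ s, s ∈ S → s < f → ∃ a b : ℕ, s = a * m + b * r := by
    intro s
    induction s using Nat.strong_induction_on with
    | _ s ih =>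
      intro hs hsf
      rcases eq_or_ne s 0 with rfl | h0
      · exact ⟨0, 0, by simp⟩
      by_cases hmem : s ∈ msg S
      · have h1 : s ∈ ({m, r} : Set ℕ) := by
          rw [← hmsg]; exact ⟨hmem, hsf⟩
        rcases h1 with rfl | h1
        · exact ⟨1, 0, by simp⟩
        · rw [Set.mem_singleton_iff] at h1
          exact ⟨0, 1, by simp [h1]⟩
      · simp only [msg, Set.mem_setOf_eq, not_and, not_not] at hmem
        obtain ⟨x, hxS, y, hyS, hx0, hy0, hxy⟩ := hmem hs h0
        have hxs : x < s := by omega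
        have hys : y < s := by omega
        obtain ⟨a1, b1, h1⟩ := ih x hxs hxS (by omega)
        obtain ⟨a2, b2, h2⟩ := ih y hys hyS (by omega)
        exact ⟨a1 + a2, b1 + b2, by rw [hxy, h1, h2]; ring⟩
  -- m is the multiplicity
  have hmin : ∀ x, x ∈ S → x ≠ 0 → m ≤ x := by
    intro x
    induction x using Nat.strong_induction_on with
    | _ x ih =>
      intro hx hx0
      by_contra h
      have hxf : x < f := by omega
      by_cases hmem : x ∈ msg S
      · have h1 : x ∈ ({m, r} : Set ℕ) := by rw [← hmsg]; exact ⟨hmem, hxf⟩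
        rcases h1 with rfl | h1
        · omega
        · rw [Set.mem_singleton_iff] at h1; omega
      · simp only [msg, Set.mem_setOf_eq, not_and, not_not] at hmem
        obtain ⟨y, hyS, z, hzS, hy0, hz0, hyz⟩ := hmem hx hx0
        have := ih y (by omega) hyS hy0
        omega
  -- m does not divide r
  have hndvd : ¬ m ∣ r := by
    rintro ⟨c, rfl⟩
    have hc2 : 2 ≤ c := by
      rcases Nat.lt_or_ge c 2 with h | h
      · interval_cases c <;> omega
      · exact h
    have : ∃ x ∈ S, ∃ y ∈ S, x ≠ 0 ∧ y ≠ 0 ∧ m * c = x + y := by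
      refine ⟨m, hmS, (c - 1) * m, by simpa using hgen (c - 1) 0, hm0, ?_, ?_⟩
      · have : 1 ≤ (c - 1) * m := Nat.one_le_iff_ne_zero.mp (Nat.mul_pos (by omega) (by omega)) |> Nat.one_le_iff_ne_zero.mpr
        omega
      · have : (c - 1) * m + m = c * m := by rw [← Nat.add_one_mul]; congr 1; omega
        rw [mul_comm m c]; omega
    exact hrm.1.2.2 this
  have hm2 : 2 ≤ m := by
    rcases Nat.lt_or_ge m 2 with h | h
    · interval_cases m
      · omega
      · exact absurd (one_dvd r) hndvd
    · exact h
  -- gcd setup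
  set d := Nat.gcd m r with hd
  have hd0 : 0 < d := Nat.gcd_pos_of_pos_left _ (by omega)
  have hdm : d ∣ m := Nat.gcd_dvd_left m r
  have hdr : d ∣ r := Nat.gcd_dvd_right m r
  set m' := m / d with hm'
  set r' := r / d with hr'
  have hm'd : m' * d = m := Nat.div_mul_cancel hdm
  have hr'd : r' * d = r := Nat.div_mul_cancel hdr
  have hco : Nat.Coprime m' r' := Nat.coprime_div_gcd_div_gcd hd0
  have hm'0 : 0 < m' := Nat.div_pos (Nat.le_of_dvd (by omega) hdm) hd0
  have hr'1 : 1 ≤ r' := Nat.div_pos (Nat.le_of_dvd (by omega) hdr) hd0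
  have hm'2 : 2 ≤ m' := by
    rcases Nat.lt_or_ge m' 2 with h | h
    · exfalso
      have hm'1 : m' = 1 := by omega
      rw [hm'1, one_mul] at hm'd
      rw [← hm'd] at hndvd
      exact hndvd hdr
    · exact h
  have hkey_rel : m' * r = r' * m := by
    calc m' * r = m' * (r' * d) := by rw [hr'd]
    _ = r' * (m' * d) := by ring
    _ = r' * m := by rw [hm'd]
  -- choice of l
  have hlex : ∃ l : ℕ, (l * r < f ∧ l < m' ∧ ∀ b, b < m' → b * r < f → b ≤ l) ∧
      ((d = 1 ∧ l = (f - 1) / r) ∨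
        (d ≠ 1 ∧ (1 ≤ l ∧ l ≤ m' - 1 ∧ l * r < f) ∧
          ∀ k, 1 ≤ k → k ≤ m' - 1 → k * r < f → k ≤ l)) := by
    have hP3 : ∀ b : ℕ, b * r < f → b ≤ (f - 1) / r :=
      fun b hb => (Nat.le_div_iff_mul_le (by omega)).mpr (by omega)
    have hP1 : ((f - 1) / r) * r < f := by
      have := Nat.div_mul_le_self (f - 1) r
      omega
    rcases eq_or_ne d 1 with hd1 | hd1
    · -- coprime case: first show f ≤ m * r using the A-property
      have hfmr : f ≤ m * r := by
        by_contra h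
        push_neg at h
        obtain ⟨c, e, hce⟩ := aux19_mrsub hm2 (by omega) hd1
        have h1 : m * r - 1 ∈ S := hce ▸ hgen c e
        have h2 : m * r ∈ S := by
          have := hgen r 0
          simpa [mul_comm] using this
        have h3 : m * r - 1 + 1 = m * r := by
          have : 4 ≤ m * r := by nlinarith
          omega
        exact hA ⟨m * r - 1, by omega, h1, by rw [h3]; exact h2⟩
      refine ⟨(f - 1) / r, ⟨hP1, ?_, fun b _ => hP3 b⟩, Or.inl ⟨hd1, rfl⟩⟩
      -- l < m' : since (f-1)/r ≤ (m*r-1)/r = m - 1 < m = m'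
      have hm'm : m' = m := by rw [hm', hd1, Nat.div_one]
      rw [hm'm]
      have h1 : (f - 1) / r ≤ (m * r - 1) / r := Nat.div_le_div_right (by omega)
      have h2 : (m * r - 1) / r = m - 1 := by
        have he : m * r - 1 = (r - 1) + (m - 1) * r := by
          have : (m - 1) * r + r = m * r := by rw [← Nat.add_one_mul]; congr 1; omega
          omega
        rw [he, Nat.add_mul_div_right _ _ (by omega : 0 < r), Nat.div_eq_of_lt (by omega)]
        omega
      omega
    · refine ⟨min (m' - 1) ((f - 1) / r), ⟨?_, by omega, ?_⟩,
        Or.inr ⟨hd1, ⟨?_, by omega, ?_⟩, ?_⟩⟩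
      · have h1 : min (m' - 1) ((f - 1) / r) * r ≤ ((f - 1) / r) * r :=
          Nat.mul_le_mul_right _ (min_le_right _ _)
        omega
      · intro b hb hbf
        exact le_min (by omega) (hP3 b hbf)
      · refine le_min (by omega) ?_
        exact hP3 1 (by omega)
      · have h1 : min (m' - 1) ((f - 1) / r) * r ≤ ((f - 1) / r) * r :=
          Nat.mul_le_mul_right _ (min_le_right _ _)
        omega
      · intro k hk1 hk2 hkf
        exact le_min hk2 (hP3 k hkf)
  obtain ⟨l, ⟨hlrf, hlm', hP3⟩, hldisj⟩ := hlex
  -- Apery minimality of multiples of r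
  have hApmin : ∀ j, j ≤ l → 1 ≤ j → j * r - m ∉ S := by
    intro j hjl hj1 hmem
    have hjrf : j * r < f := by
      have : j * r ≤ l * r := Nat.mul_le_mul_right _ hjl
      omega
    have hjrm : m < j * r := by
      have : 1 * r ≤ j * r := Nat.mul_le_mul_right _ hj1
      omega
    obtain ⟨a, b, hab⟩ := hbelow _ hmem (by omega)
    have heq : j * r = a * m + b * r + m := (Nat.sub_eq_iff_eq_add hjrm.le).mp hab
    have hbj : b < j := by
      have h1 : b * r < j * r := by
        have : b * r ≤ a * m + b * r := by omega
        omega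
      exact Nat.lt_of_mul_lt_mul_right h1
    have hsub : (j - b) * r = (a + 1) * m := by
      rw [tsub_mul]
      refine Nat.sub_eq_of_eq_add ?_
      rw [heq]; ring
    have hsub' : (j - b) * r' = (a + 1) * m' := by
      have h1 : ((j - b) * r') * d = ((a + 1) * m') * d := by
        rw [mul_assoc, mul_assoc, hr'd, hm'd]; exact hsub
      exact Nat.eq_of_mul_eq_mul_right hd0 h1
    have hdvd : m' ∣ (j - b) := by
      have h1 : m' ∣ (j - b) * r' := ⟨a + 1, by rw [hsub']; ring⟩
      exact (Nat.Coprime.dvd_of_dvd_mul_right hco h1)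
    have hjb1 : 1 ≤ j - b := by omega
    have := Nat.le_of_dvd (by omega) hdvd
    omega
  -- residues of multiples of r repeat with period m'
  have hmodlem : ∀ b : ℕ, (b * r) % m = ((b % m') * r) % m := by
    intro b
    conv_lhs => rw [← Nat.div_add_mod b m']
    have e1 : m' * (b / m') * r = b / m' * r' * m := by
      rw [mul_comm m' (b / m'), mul_assoc, hkey_rel]; ring
    have h1 : (m' * (b / m') + b % m') * r = b % m' * r + b / m' * r' * m := by
      rw [add_mul, e1]; ring
    rw [h1, Nat.add_mul_mod_self_right]
  -- first conjunct
  have hSeq : S = ({x | ∃ a b : ℕ, x = a * m + b * r} ∪ {x | f < x}) := by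
    ext s
    constructor
    · intro hs
      rcases lt_trichotomy s f with h | rfl | h
      · exact Or.inl (hbelow s hs h)
      · exact absurd hs hfnS
      · exact Or.inr h
    · rintro (⟨a, b, rfl⟩ | h)
      · exact hgen a b
      · exact hSgt _ h
  refine ⟨hSeq, hrf, ?_, l, hldisj, ?_, ?_⟩
  · rintro ⟨a, b, hab⟩
    exact hfnS (hab ▸ hgen a b)
  · -- Apery set equality
    ext w
    simp only [Ap, Set.mem_setOf_eq, Set.mem_union]
    constructor
    · rintro ⟨hwS, hw2⟩
      rcases lt_trichotomy w f with hwf | rfl | hwf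
      · -- w < f : w is a multiple of r with coefficient ≤ l
        obtain ⟨a, b, rfl⟩ := hbelow w hwS hwf
        have ha : a = 0 := by
          by_contra ha0
          obtain ⟨a', rfl⟩ : ∃ a', a = a' + 1 := ⟨a - 1, by omega⟩
          have hge : m ≤ (a' + 1) * m + b * r := by
            have : 1 * m ≤ (a' + 1) * m := Nat.mul_le_mul_right _ (by omega)
            omega
          have hnm : (a' + 1) * m + b * r - m ∉ S := hw2.resolve_left (by omega)
          apply hnm
          have h1 : (a' + 1) * m + b * r - m = a' * m + b * r :=
            Nat.sub_eq_of_eq_add (by ring)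
          rw [h1]; exact hgen a' b
        subst ha
        rw [zero_mul, zero_add] at *
        have hbm' : b < m' := by
          by_contra hb
          push_neg at hb
          obtain ⟨c, rfl⟩ : ∃ c, b = m' + c := ⟨b - m', by omega⟩
          obtain ⟨e, he⟩ : ∃ e, r' = e + 1 := ⟨r' - 1, by omega⟩
          have hwm : m ≤ (m' + c) * r := by
            calc m ≤ r' * m := by nlinarith
            _ = m' * r := hkey_rel.symm
            _ ≤ (m' + c) * r := Nat.mul_le_mul_right _ (by omega)
          have hnm : (m' + c) * r - m ∉ S := hw2.resolve_left (by omega)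
          apply hnm
          have h1 : (m' + c) * r - m = e * m + c * r := by
            refine Nat.sub_eq_of_eq_add ?_
            calc (m' + c) * r = m' * r + c * r := by ring
            _ = r' * m + c * r := by rw [hkey_rel]
            _ = (e + 1) * m + c * r := by rw [he]
            _ = e * m + c * r + m := by ring
          rw [h1]; exact hgen e c
        exact Or.inl ⟨b, hP3 b hbm' hwf, rfl⟩
      · exact absurd hwS hfnS
      · -- w > f
        have hwm : m ≤ w := by omega
        have hwmS : w - m ∉ S := hw2.resolve_left (by omega)
        have hwfm : w ≤ f + m := by
          have := hfmax _ hwmS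
          omega
        refine Or.inr ⟨w - f, by omega, by omega, by omega, ?_⟩
        intro j hj hcon
        have hwfi : f + (w - f) = w := by omega
        rw [hwfi] at hcon
        have hjrf : j * r < f := by
          have : j * r ≤ l * r := Nat.mul_le_mul_right _ hj
          omega
        have hjw : j * r ≤ w := by omega
        have hdvd : m ∣ w - j * r := (Nat.modEq_iff_dvd' hjw).mp hcon.symm
        obtain ⟨k, hk⟩ := hdvd
        obtain ⟨k', rfl⟩ : ∃ k', k = k' + 1 := by
          refine ⟨k - 1, ?_⟩
          rcases Nat.eq_zero_or_pos k with h | h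
          · rw [h, mul_zero] at hk; omega
          · omega
        apply hwmS
        have h1 : w - m = j * r + k' * m := by
          refine Nat.sub_eq_of_eq_add ?_
          have h2 : w = j * r + m * (k' + 1) := by omega
          rw [h2]; ring
        rw [h1, add_comm]
        exact hgen k' j
    · rintro (⟨j, hjl, rfl⟩ | ⟨i, hi1, him, rfl, hmod⟩)
      · refine ⟨by simpa using hgen 0 j, ?_⟩
        rcases eq_or_ne j 0 with rfl | hj0
        · left; simpa using (by omega : 0 < m)
        · right; exact hApmin j hjl (by omega)
      · refine ⟨hSgt _ (by omega), Or.inr ?_⟩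
        intro hcon
        have h1 : f + i - m < f := by
          have hle : f + i - m ≤ f := by omega
          have hne : f + i - m ≠ f := fun h => hfnS (h ▸ hcon)
          omega
        obtain ⟨a, b, hab⟩ := hbelow _ hcon h1
        have heq : f + i = a * m + b * r + m := (Nat.sub_eq_iff_eq_add (by omega)).mp hab
        have hmod2 : (f + i) % m = (b * r) % m := by
          rw [heq, show a * m + b * r + m = b * r + (a + 1) * m by ring,
            Nat.add_mul_mod_self_right]
        have hb0f : (b % m') * r < f := by
          have h2 : (b % m') * r ≤ b * r := Nat.mul_le_mul_right _ (Nat.mod_le _ _)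
          have h3 : b * r ≤ a * m + b * r := by omega
          omega
        have hb0l : b % m' ≤ l := hP3 _ (Nat.mod_lt _ (by omega)) hb0f
        exact hmod _ hb0l (by rw [hmod2, hmodlem b])
  · -- disjointness
    rw [Set.disjoint_left]
    rintro x ⟨j, hjl, rfl⟩ ⟨i, hi1, him, heq, -⟩
    have h1 : j * r ≤ l * r := Nat.mul_le_mul_right _ hjl
    omega
end
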